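/- Suppose ℙ(Y=1) = 1/2, the peer reference F_j is Bayesian informative (1 − FNR(F_j) − FPR(F_j) > 0), and F_i is conditionally independent of F_j given Y. Then S̄(F_i, F_j) = (1 − FNR(F_j) − FPR(F_j)) · (ℙ(F_i = Y) − 1/2). Consequently, if F_i' is another classifier conditionally independent of F_j given Y and ℙ(F_i = Y) ≥ ℙ(F_i' = Y), then S̄(F_i, F_j) ≥ S̄(F_i', F_j); i.e., the more accurate classifier receives a higher expected peer-prediction score. -/

import Mathlib

/-! For `{1,2}`-valued labels the CA score is twice the covariance of the indicators of
`F = 1` and `G = 1`. Conditional independence given `Y` removes the within-class covariance,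
leaving `ℙ(Y=1) ℙ(Y=2) · J(F) · J(G)` with `J = 1 − FNR − FPR = TPR − FPR`. Under a uniform
prior the accuracy is `ℙ(F = Y) = 1/2 + J(F)/2`, so the score is `J(G) · (ℙ(F = Y) − 1/2)`,
which is increasing in the accuracy of `F` as soon as `J(G) > 0`. -/

open MeasureTheory

/-- Probability of an event, as a real number. -/
noncomputable def pr {Ω : Type*} [MeasurableSpace Ω] (μ : Measure Ω) (s : Set Ω) : ℝ :=
  (μ s).toReal

/-- A `{1,2}`-valued random label. -/
def IsBinaryLabel {Ω : Type*} (F : Ω → ℕ) : Prop :=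
  ∀ ω, F ω = 1 ∨ F ω = 2

/-- False negative rate: `FNR(F) = ℙ(F=2 ∣ Y=1)`. -/
noncomputable def fnr {Ω : Type*} [MeasurableSpace Ω] (μ : Measure Ω) (F Y : Ω → ℕ) : ℝ :=
  pr μ {ω | F ω = 2 ∧ Y ω = 1} / pr μ {ω | Y ω = 1}

/-- False positive rate: `FPR(F) = ℙ(F=1 ∣ Y=2)`. -/
noncomputable def fpr {Ω : Type*} [MeasurableSpace Ω] (μ : Measure Ω) (F Y : Ω → ℕ) : ℝ :=
  pr μ {ω | F ω = 1 ∧ Y ω = 2} / pr μ {ω | Y ω = 2}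

/-- The Correlated Agreement correlation matrix:
`Δ(F,G)(k,l) = ℙ(F=k, G=l) − ℙ(F=k)·ℙ(G=l)`. -/
noncomputable def caDelta {Ω : Type*} [MeasurableSpace Ω] (μ : Measure Ω)
    (F G : Ω → ℕ) (k l : ℕ) : ℝ :=
  pr μ {ω | F ω = k ∧ G ω = l} - pr μ {ω | F ω = k} * pr μ {ω | G ω = l}

/-- The expected Correlated Agreement score of `F` against `G`:
`S̄(F,G) = ℙ(F = G) − ℙ(F=1)ℙ(G=1) − ℙ(F=2)ℙ(G=2)`. -/
noncomputable def caScore {Ω : Type*} [MeasurableSpace Ω] (μ : Measure Ω)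
    (F G : Ω → ℕ) : ℝ :=
  pr μ {ω | F ω = G ω} - pr μ {ω | F ω = 1} * pr μ {ω | G ω = 1}
    - pr μ {ω | F ω = 2} * pr μ {ω | G ω = 2}

/-- `F` and `G` are conditionally independent given `Y`:
`ℙ(F=k, G=l ∣ Y=y) = ℙ(F=k ∣ Y=y)·ℙ(G=l ∣ Y=y)` for all `k,l,y ∈ {1,2}`. -/
def CondIndepGiven {Ω : Type*} [MeasurableSpace Ω] (μ : Measure Ω)
    (F G Y : Ω → ℕ) : Prop :=
  ∀ k l y : ℕ, k ∈ ({1, 2} : Set ℕ) → l ∈ ({1, 2} : Set ℕ) → y ∈ ({1, 2} : Set ℕ) →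
    pr μ {ω | F ω = k ∧ G ω = l ∧ Y ω = y} / pr μ {ω | Y ω = y} =
      (pr μ {ω | F ω = k ∧ Y ω = y} / pr μ {ω | Y ω = y}) *
        (pr μ {ω | G ω = l ∧ Y ω = y} / pr μ {ω | Y ω = y})

namespace IsBinaryLabel

variable {Ω : Type*} [MeasurableSpace Ω] {μ : Measure Ω} {Y : Ω → ℕ}

lemma pr_eq_two [IsProbabilityMeasure μ] (hYb : IsBinaryLabel Y) (hY : Measurable Y) :
    pr μ {ω | Y ω = 2} = 1 - pr μ {ω | Y ω = 1} := by
  have hcompl : {ω | Y ω = 2} = {ω | Y ω = 1}ᶜ := by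
    ext ω
    rcases hYb ω with h | h <;> simp [h]
  rw [hcompl]
  exact probReal_compl_eq_one_sub (hY (measurableSet_singleton 1))

lemma pr_and_eq_one_add_pr_and_eq_two [IsFiniteMeasure μ] (hYb : IsBinaryLabel Y)
    (hY : Measurable Y) (P : Ω → Prop) :
    pr μ {ω | P ω ∧ Y ω = 1} + pr μ {ω | P ω ∧ Y ω = 2} = pr μ {ω | P ω} := by
  have hdiff : {ω | P ω ∧ Y ω = 2} = {ω | P ω} \ {ω | Y ω = 1} := by
    ext ω
    rcases hYb ω with h | h <;> simp [h]
  rw [hdiff]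
  exact measureReal_inter_add_sdiff (hY (measurableSet_singleton 1))

lemma pr_eq_one_and_add_pr_eq_two_and [IsFiniteMeasure μ] (hYb : IsBinaryLabel Y)
    (hY : Measurable Y) (P : Ω → Prop) :
    pr μ {ω | Y ω = 1 ∧ P ω} + pr μ {ω | Y ω = 2 ∧ P ω} = pr μ {ω | P ω} := by
  simpa only [and_comm] using hYb.pr_and_eq_one_add_pr_and_eq_two (μ := μ) hY P

end IsBinaryLabel

section

variable {Ω : Type*} [MeasurableSpace Ω] {μ : Measure Ω} {F G Y : Ω → ℕ}

lemma pr_eq_label_eq_add [IsFiniteMeasure μ] (hYb : IsBinaryLabel Y) (hY : Measurable Y) :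
    pr μ {ω | F ω = Y ω} = pr μ {ω | F ω = 1 ∧ Y ω = 1} + pr μ {ω | F ω = 2 ∧ Y ω = 2} := by
  rw [← hYb.pr_and_eq_one_add_pr_and_eq_two hY]
  congr 3 <;> ext ω <;> constructor <;> rintro ⟨h, hy⟩ <;> simp_all

lemma CondIndepGiven.pr_and_and_eq_mul_div (hci : CondIndepGiven μ F G Y) {k l y : ℕ}
    (hk : k ∈ ({1, 2} : Set ℕ)) (hl : l ∈ ({1, 2} : Set ℕ)) (hy : y ∈ ({1, 2} : Set ℕ))
    (hpy : pr μ {ω | Y ω = y} ≠ 0) :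
    pr μ {ω | F ω = k ∧ G ω = l ∧ Y ω = y} =
      pr μ {ω | F ω = k ∧ Y ω = y} * pr μ {ω | G ω = l ∧ Y ω = y} / pr μ {ω | Y ω = y} := by
  have h := hci k l y hk hl hy
  field_simp at h ⊢
  exact h

variable [IsProbabilityMeasure μ]

lemma caScore_eq_two_mul_caDelta (hFb : IsBinaryLabel F) (hF : Measurable F)
    (hGb : IsBinaryLabel G) (hG : Measurable G) :
    caScore μ F G = 2 * caDelta μ F G 1 1 := by
  have hF2 := hGb.pr_and_eq_one_add_pr_and_eq_two (μ := μ) hG (fun ω => F ω = 2)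
  have hG1 := hFb.pr_eq_one_and_add_pr_eq_two_and (μ := μ) hF (fun ω => G ω = 1)
  have hagree : pr μ {ω | F ω = G ω} = pr μ {ω | F ω = 1 ∧ G ω = 1} +
      pr μ {ω | F ω = 2 ∧ G ω = 2} := pr_eq_label_eq_add hGb hG
  unfold caScore caDelta
  rw [hFb.pr_eq_two hF, hGb.pr_eq_two hG] at *
  linear_combination hagree + hF2 - hG1

lemma one_sub_fnr_sub_fpr_eq (hFb : IsBinaryLabel F) (hF : Measurable F)
    (hp : pr μ {ω | Y ω = 1} ≠ 0) :
    1 - fnr μ F Y - fpr μ F Y =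
      pr μ {ω | F ω = 1 ∧ Y ω = 1} / pr μ {ω | Y ω = 1} -
        pr μ {ω | F ω = 1 ∧ Y ω = 2} / pr μ {ω | Y ω = 2} := by
  have hY1 := hFb.pr_eq_one_and_add_pr_eq_two_and (μ := μ) hF (fun ω => Y ω = 1)
  unfold fnr fpr
  field_simp
  linear_combination -hY1

lemma pr_eq_label_eq_fnr_fpr (hFb : IsBinaryLabel F) (hF : Measurable F) (hYb : IsBinaryLabel Y)
    (hY : Measurable Y) (hp₁ : pr μ {ω | Y ω = 1} ≠ 0) (hp₂ : pr μ {ω | Y ω = 2} ≠ 0) :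
    pr μ {ω | F ω = Y ω} =
      pr μ {ω | Y ω = 1} * (1 - fnr μ F Y) + pr μ {ω | Y ω = 2} * (1 - fpr μ F Y) := by
  have hY1 := hFb.pr_eq_one_and_add_pr_eq_two_and (μ := μ) hF (fun ω => Y ω = 1)
  have hY2 := hFb.pr_eq_one_and_add_pr_eq_two_and (μ := μ) hF (fun ω => Y ω = 2)
  rw [pr_eq_label_eq_add hYb hY]
  unfold fnr fpr
  field_simp
  linear_combination hY1 + hY2

theorem caDelta_eq_of_condIndepGiven (hFb : IsBinaryLabel F) (hF : Measurable F)
    (hGb : IsBinaryLabel G) (hG : Measurable G) (hYb : IsBinaryLabel Y) (hY : Measurable Y)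
    (hp₁ : pr μ {ω | Y ω = 1} ≠ 0) (hp₂ : pr μ {ω | Y ω = 2} ≠ 0)
    (hci : CondIndepGiven μ F G Y) :
    caDelta μ F G 1 1 = pr μ {ω | Y ω = 1} * pr μ {ω | Y ω = 2} *
      (1 - fnr μ F Y - fpr μ F Y) * (1 - fnr μ G Y - fpr μ G Y) := by
  have hjoint := hYb.pr_and_eq_one_add_pr_and_eq_two (μ := μ) hY (fun ω => F ω = 1 ∧ G ω = 1)
  have hF1 := hYb.pr_and_eq_one_add_pr_and_eq_two (μ := μ) hY (fun ω => F ω = 1)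
  have hG1 := hYb.pr_and_eq_one_add_pr_and_eq_two (μ := μ) hY (fun ω => G ω = 1)
  have hsum := hYb.pr_eq_two (μ := μ) hY
  simp only [and_assoc] at hjoint
  have h1 : (1 : ℕ) ∈ ({1, 2} : Set ℕ) := by simp
  have h2 : (2 : ℕ) ∈ ({1, 2} : Set ℕ) := by simp
  rw [hci.pr_and_and_eq_mul_div h1 h1 h1 hp₁, hci.pr_and_and_eq_mul_div h1 h1 h2 hp₂] at hjoint
  unfold caDelta
  rw [one_sub_fnr_sub_fpr_eq hFb hF hp₁, one_sub_fnr_sub_fpr_eq hGb hG hp₁, ← hjoint, ← hF1, ← hG1]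
  rw [hsum] at hp₂ ⊢
  field_simp
  ring

theorem caScore_eq_of_condIndepGiven_of_pr_eq_half (hFb : IsBinaryLabel F) (hF : Measurable F)
    (hGb : IsBinaryLabel G) (hG : Measurable G) (hYb : IsBinaryLabel Y) (hY : Measurable Y)
    (hprior : pr μ {ω | Y ω = 1} = 1 / 2) (hci : CondIndepGiven μ F G Y) :
    caScore μ F G = (1 - fnr μ G Y - fpr μ G Y) * (pr μ {ω | F ω = Y ω} - 1 / 2) := by
  have hp₂ : pr μ {ω | Y ω = 2} = 1 / 2 := by rw [hYb.pr_eq_two hY, hprior]; norm_num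
  have hp₁ne : pr μ {ω | Y ω = 1} ≠ 0 := by rw [hprior]; norm_num
  have hp₂ne : pr μ {ω | Y ω = 2} ≠ 0 := by rw [hp₂]; norm_num
  rw [caScore_eq_two_mul_caDelta hFb hF hGb hG,
    caDelta_eq_of_condIndepGiven hFb hF hGb hG hYb hY hp₁ne hp₂ne hci,
    pr_eq_label_eq_fnr_fpr hFb hF hYb hY hp₁ne hp₂ne, hprior, hp₂]
  ring

end

theorem peer_prediction_rewards_accuracy_general
    {Ω : Type*} [MeasurableSpace Ω] (μ : Measure Ω) [IsProbabilityMeasure μ]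
    (Fi Fj Y : Ω → ℕ)
    (hFimeas : Measurable Fi) (hFjmeas : Measurable Fj) (hYmeas : Measurable Y)
    (hFibin : IsBinaryLabel Fi) (hFjbin : IsBinaryLabel Fj) (hYbin : IsBinaryLabel Y)
    (hprior : pr μ {ω | Y ω = 1} = 1 / 2)
    (hinfj : 0 < 1 - fnr μ Fj Y - fpr μ Fj Y)
    (hci : CondIndepGiven μ Fi Fj Y) :
    caScore μ Fi Fj =
        (1 - fnr μ Fj Y - fpr μ Fj Y) * (pr μ {ω | Fi ω = Y ω} - 1 / 2) ∧
      ∀ Fi' : Ω → ℕ, Measurable Fi' → IsBinaryLabel Fi' →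
        CondIndepGiven μ Fi' Fj Y →
        pr μ {ω | Fi' ω = Y ω} ≤ pr μ {ω | Fi ω = Y ω} →
        caScore μ Fi' Fj ≤ caScore μ Fi Fj := by
  have hscore : ∀ F : Ω → ℕ, Measurable F → IsBinaryLabel F → CondIndepGiven μ F Fj Y →
      caScore μ F Fj = (1 - fnr μ Fj Y - fpr μ Fj Y) * (pr μ {ω | F ω = Y ω} - 1 / 2) :=
    fun F hF hFb hciF => caScore_eq_of_condIndepGiven_of_pr_eq_half hFb hF hFjbin hFjmeas hYbin
      hYmeas hprior hciF
  refine ⟨hscore Fi hFimeas hFibin hci, fun Fi' hFi'meas hFi'bin hci' hacc => ?_⟩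
  rw [hscore Fi hFimeas hFibin hci, hscore Fi' hFi'meas hFi'bin hci']
  exact mul_le_mul_of_nonneg_left (by linarith) hinfj.le

/-- under a uniform prior, with a Bayesian informative peer reference
`F_j` and `F_i` conditionally independent of `F_j` given `Y`,
`S̄(F_i,F_j) = (1 − FNR(F_j) − FPR(F_j)) · (ℙ(F_i = Y) − 1/2)`; consequently the more
accurate classifier receives a higher expected peer-prediction score. -/
theorem peer_prediction_rewards_accuracy
    {Ω : Type*} [MeasurableSpace Ω] (μ : Measure Ω) [IsProbabilityMeasure μ]
    (Fi Fj Y : Ω → ℕ)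
    (hFimeas : Measurable Fi) (hFjmeas : Measurable Fj) (hYmeas : Measurable Y)
    (hFibin : IsBinaryLabel Fi) (hFjbin : IsBinaryLabel Fj) (hYbin : IsBinaryLabel Y)
    (hY1pos : 0 < pr μ {ω | Y ω = 1}) (hY1lt : pr μ {ω | Y ω = 1} < 1)
    (hprior : pr μ {ω | Y ω = 1} = 1 / 2)
    (hinfj : 0 < 1 - fnr μ Fj Y - fpr μ Fj Y)
    (hci : CondIndepGiven μ Fi Fj Y) :
    caScore μ Fi Fj =
        (1 - fnr μ Fj Y - fpr μ Fj Y) * (pr μ {ω | Fi ω = Y ω} - 1 / 2) ∧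
      ∀ Fi' : Ω → ℕ, Measurable Fi' → IsBinaryLabel Fi' →
        CondIndepGiven μ Fi' Fj Y →
        pr μ {ω | Fi' ω = Y ω} ≤ pr μ {ω | Fi ω = Y ω} →
        caScore μ Fi' Fj ≤ caScore μ Fi Fj :=
  peer_prediction_rewards_accuracy_general μ Fi Fj Y hFimeas hFjmeas hYmeas hFibin hFjbin hYbin
    hprior hinfj hci
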